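/- arXiv:1611.09965 — 4 statements merged into one kernel-verified Lean document; each statement's English description precedes it below -/
import Mathlib

section
/- Let Y be a separable metric space, κ > 0, and let ν₁, ν₂ be Borel measures on Y with ν₂ upper regular by open sets. Let 0 < s, t < ∞ and let A ⊆ Y be a set such that D^κν₁(y) ≤ s and D^κν₂(y) ≥ t for all y ∈ A. Then ν₁(A) ≤ 5^κ · s · t^{-1} · ν₂(A). -/
/-!
Fix `s' > s` and `t' < t` and an open `U ⊇ A`. Every `y ∈ A` has arbitrarily small radii `r` with
`closedBall y r ⊆ U`, `ν₁ (closedBall y (5 r)) ≤ s' (5 r)^κ` and `ν₂ (closedBall y r) ≥ t' r^κ`.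
The Vitali covering lemma extracts from these balls a countable disjoint family whose five-fold
enlargements cover `A`, so `ν₁ A ≤ 5^κ s' t'⁻¹ ν₂ U`. Upper regularity of `ν₂` replaces `U` by `A`,
and letting `s' → s`, `t' → t` gives the claim.
-/

open scoped ENNReal NNReal
open MeasureTheory Metric Filter Set Topology

/-- A measure is upper regular by open sets if the measure of every set is the infimum of the
measures of open sets containing it. -/
def UpperRegular {Y : Type*} [TopologicalSpace Y] [MeasurableSpace Y] (η : Measure Y) : Prop :=
  ∀ A : Set Y, η A = ⨅ (U : Set Y) (_ : IsOpen U) (_ : A ⊆ U), η U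

/-- The lower `κ`-density of a measure at a point. -/
noncomputable def dens {Y : Type*} [PseudoMetricSpace Y] [MeasurableSpace Y] (κ : ℝ)
    (ν : Measure Y) (y : Y) : ℝ≥0∞ :=
  Filter.liminf (fun r : ℝ => ν (Metric.ball y r) / ENNReal.ofReal (r ^ κ)) (𝓝[>] 0)

theorem ENNReal.le_ofReal_mul_of_forall_gt {a b : ℝ≥0∞} {c : ℝ} (hc : 0 < c)
    (h : ∀ c' > c, a ≤ ENNReal.ofReal c' * b) : a ≤ ENNReal.ofReal c * b := by
  have hlim : Tendsto (fun c' => ENNReal.ofReal c' * b) (𝓝[>] c) (𝓝 (ENNReal.ofReal c * b)) :=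
    ENNReal.Tendsto.mul_const
      ((ENNReal.continuous_ofReal.tendsto c).mono_left nhdsWithin_le_nhds)
      (Or.inl (ENNReal.ofReal_pos.2 hc).ne')
  exact ge_of_tendsto hlim (eventually_nhdsWithin_of_forall h)

theorem UpperRegular.le_mul_of_forall_isOpen {Y : Type*} [TopologicalSpace Y] [MeasurableSpace Y]
    {ν : Measure Y} (hreg : UpperRegular ν) {A : Set Y} {m c : ℝ≥0∞} (hc : c ≠ ∞)
    (h : ∀ U, IsOpen U → A ⊆ U → m ≤ c * ν U) : m ≤ c * ν A := by
  rcases eq_or_ne c 0 with rfl | hc0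
  · simpa using h univ isOpen_univ (subset_univ A)
  rw [hreg A]
  simp only [ENNReal.mul_iInf_of_ne hc0 hc, le_iInf_iff]
  exact h

section Density

variable {Y : Type*} [PseudoMetricSpace Y] [MeasurableSpace Y] {κ : ℝ} {y : Y}

theorem eventually_ofReal_mul_rpow_le_measure_closedBall {ν : Measure Y} {t : ℝ}
    (h : ENNReal.ofReal t < dens κ ν y) :
    ∀ᶠ r in 𝓝[>] (0 : ℝ), ENNReal.ofReal (t * r ^ κ) ≤ ν (closedBall y r) := by
  filter_upwards [eventually_lt_of_lt_liminf h, self_mem_nhdsWithin] with r hr (hr0 : 0 < r)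
  have hpow : 0 < r ^ κ := Real.rpow_pos_of_pos hr0 κ
  rw [ENNReal.ofReal_mul' hpow.le]
  calc _ ≤ ν (ball y r) :=
        ((ENNReal.lt_div_iff_mul_lt (Or.inl (by simpa using hpow))
          (Or.inl ENNReal.ofReal_ne_top)).1 hr).le
    _ ≤ ν (closedBall y r) := measure_mono ball_subset_closedBall

theorem frequently_measure_closedBall_le_ofReal_mul_rpow (hκ : 0 < κ) {ν : Measure Y} {s : ℝ}
    (h : dens κ ν y < ENNReal.ofReal s) :
    ∃ᶠ r in 𝓝[>] (0 : ℝ), ν (closedBall y r) ≤ ENNReal.ofReal (s * r ^ κ) := by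
  obtain ⟨s₀, hs₀, hdens, hs₀s⟩ := ENNReal.lt_iff_exists_real_btwn.1 h
  obtain ⟨hs₀s, hs⟩ := ENNReal.ofReal_lt_ofReal_iff'.1 hs₀s
  -- The gap between `s₁` and `s` pays for shrinking `ball y ρ` to `closedBall y (θ * ρ)`.
  obtain ⟨s₁, hs₀s₁, hs₁s⟩ := exists_between hs₀s
  have hs₁ : 0 < s₁ := hs₀.trans_lt hs₀s₁
  set θ := (s₁ / s) ^ κ⁻¹ with hθ
  have hθ0 : 0 < θ := by positivity
  have hθ1 : θ < 1 :=
    Real.rpow_lt_one (by positivity) ((div_lt_one hs).2 hs₁s) (inv_pos.2 hκ)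
  have hθκ : θ ^ κ = s₁ / s := by
    rw [hθ, ← Real.rpow_mul (by positivity), inv_mul_cancel₀ hκ.ne', Real.rpow_one]
  have hfreq : ∃ᶠ ρ in 𝓝[>] (0 : ℝ), ν (ball y ρ) / ENNReal.ofReal (ρ ^ κ) < ENNReal.ofReal s₁ :=
    frequently_lt_of_liminf_lt (by isBoundedDefault)
      (hdens.trans_le (ENNReal.ofReal_le_ofReal hs₀s₁.le))
  have hθρ : Tendsto (θ * ·) (𝓝[>] (0 : ℝ)) (𝓝[>] 0) :=
    tendsto_iff_comap.2 (comap_mulLeft_nhdsGT_zero hθ0).ge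
  refine hθρ.frequently ((hfreq.and_eventually self_mem_nhdsWithin).mono
    fun ρ ⟨hρ, (hρ0 : 0 < ρ)⟩ => ?_)
  have hpow : 0 < ρ ^ κ := Real.rpow_pos_of_pos hρ0 κ
  calc ν (closedBall y (θ * ρ)) ≤ ν (ball y ρ) :=
        measure_mono (closedBall_subset_ball (by nlinarith))
    _ ≤ ENNReal.ofReal s₁ * ENNReal.ofReal (ρ ^ κ) :=
        ((ENNReal.div_lt_iff (Or.inl (by simpa using hpow)) (Or.inl ENNReal.ofReal_ne_top)).1 hρ).le
    _ = ENNReal.ofReal (s * (θ * ρ) ^ κ) := by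
        rw [← ENNReal.ofReal_mul hs₁.le, Real.mul_rpow hθ0.le hρ0.le, hθκ]
        congr 1
        field_simp

theorem exists_closedBall_measure_le_of_dens (hκ : 0 < κ) {ν₁ ν₂ : Measure Y} {s t : ℝ}
    (ht : 0 < t) {U : Set Y} (hU : U ∈ 𝓝 y) (h1 : dens κ ν₁ y < ENNReal.ofReal s)
    (h2 : ENNReal.ofReal t < dens κ ν₂ y) :
    ∃ r ∈ Ioc (0 : ℝ) 1, closedBall y r ⊆ U ∧
      ν₁ (closedBall y (5 * r)) ≤ ENNReal.ofReal (5 ^ κ * s * t⁻¹) * ν₂ (closedBall y r) := by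
  have hsmall : ∀ᶠ r in 𝓝[>] (0 : ℝ), r ∈ Ioc (0 : ℝ) 1 ∧ closedBall y r ⊆ U :=
    Eventually.and (Ioc_mem_nhdsGT zero_lt_one)
      (eventually_nhdsWithin_of_eventually_nhds (eventually_closedBall_subset hU))
  have hscaled := eventually_nhdsGT_zero_mul_left (x := 5⁻¹) (by norm_num)
    ((eventually_ofReal_mul_rpow_le_measure_closedBall h2).and hsmall)
  obtain ⟨ρ, hρν₁, hρν₂, hρ, hρU⟩ :=
    ((frequently_measure_closedBall_le_ofReal_mul_rpow hκ h1).and_eventually hscaled).exists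
  refine ⟨5⁻¹ * ρ, hρ, hρU, ?_⟩
  have hρ0 : 0 ≤ ρ := by linarith [hρ.1]
  rw [show 5 * (5⁻¹ * ρ) = ρ by ring]
  calc ν₁ (closedBall y ρ) ≤ ENNReal.ofReal (s * ρ ^ κ) := hρν₁
    _ = ENNReal.ofReal (5 ^ κ * s * t⁻¹) * ENNReal.ofReal (t * (5⁻¹ * ρ) ^ κ) := by
        rw [← ENNReal.ofReal_mul' (by positivity), Real.mul_rpow (by norm_num) hρ0,
          Real.inv_rpow (by norm_num)]
        congr 1
        field_simp
    _ ≤ _ := by gcongr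

end Density

section Covering

variable {Y : Type*} [PseudoMetricSpace Y] [TopologicalSpace.SeparableSpace Y] [MeasurableSpace Y]
  [OpensMeasurableSpace Y]

theorem measure_le_mul_of_forall_exists_closedBall {ν₁ ν₂ : Measure Y} {A U : Set Y}
    {C : ℝ≥0∞} (h : ∀ y ∈ A, ∃ r ∈ Ioc (0 : ℝ) 1, closedBall y r ⊆ U ∧
      ν₁ (closedBall y (5 * r)) ≤ C * ν₂ (closedBall y r)) :
    ν₁ A ≤ C * ν₂ U := by
  choose! R hR hRU hRν using h
  obtain ⟨u, huA, hdisj, hcov⟩ := Vitali.exists_disjoint_subfamily_covering_enlargement_closedBall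
    A (fun y => y) R 1 (fun y hy => (hR y hy).2) 5 (by norm_num)
  have hu : u.Countable := (hdisj.mono fun _ => ball_subset_closedBall).countable_of_isOpen
    (fun _ _ => isOpen_ball) fun y hy => nonempty_ball.2 (hR y (huA hy)).1
  have hAu : A ⊆ ⋃ y ∈ u, closedBall y (5 * R y) := fun a ha => by
    obtain ⟨b, hb, hab⟩ := hcov a ha
    exact mem_biUnion hb (hab (mem_closedBall_self (hR a ha).1.le))
  calc ν₁ A ≤ ∑' y : u, ν₁ (closedBall y (5 * R y)) :=
        (measure_mono hAu).trans (measure_biUnion_le _ hu _)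
    _ ≤ ∑' y : u, C * ν₂ (closedBall y (R y)) := ENNReal.tsum_le_tsum fun y => hRν y (huA y.2)
    _ = C * ν₂ (⋃ y ∈ u, closedBall y (R y)) := by
        rw [ENNReal.tsum_mul_left, measure_biUnion hu hdisj fun _ _ => measurableSet_closedBall]
    _ ≤ C * ν₂ U := by
        gcongr
        exact iUnion₂_subset fun y hy => hRU y (huA hy)

theorem measure_le_of_dens_lt {κ : ℝ} (hκ : 0 < κ) {ν₁ ν₂ : Measure Y} (hreg : UpperRegular ν₂)
    {s t : ℝ} (ht : 0 < t) {A : Set Y} (h1 : ∀ y ∈ A, dens κ ν₁ y < ENNReal.ofReal s)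
    (h2 : ∀ y ∈ A, ENNReal.ofReal t < dens κ ν₂ y) :
    ν₁ A ≤ ENNReal.ofReal (5 ^ κ * s * t⁻¹) * ν₂ A :=
  hreg.le_mul_of_forall_isOpen ENNReal.ofReal_ne_top fun _U hU hAU =>
    measure_le_mul_of_forall_exists_closedBall fun y hy =>
      exists_closedBall_measure_le_of_dens hκ ht (hU.mem_nhds (hAU hy)) (h1 y hy) (h2 y hy)

end Covering

theorem compare_measures_of_density {Y : Type*}
    [MetricSpace Y] [TopologicalSpace.SeparableSpace Y] [MeasurableSpace Y] [BorelSpace Y]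
    (κ : ℝ) (hκ : 0 < κ) (ν₁ ν₂ : Measure Y) (hreg : UpperRegular ν₂)
    (s t : ℝ) (hs : 0 < s) (ht : 0 < t) (A : Set Y)
    (h1 : ∀ y ∈ A, dens κ ν₁ y ≤ ENNReal.ofReal s)
    (h2 : ∀ y ∈ A, ENNReal.ofReal t ≤ dens κ ν₂ y) :
    ν₁ A ≤ ENNReal.ofReal (5 ^ κ * s * t⁻¹) * ν₂ A := by
  refine ENNReal.le_ofReal_mul_of_forall_gt (by positivity) fun c hc => ?_
  have h5 : (0 : ℝ) < 5 ^ κ := by positivity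
  have hc0 : 0 < c := lt_trans (by positivity) hc
  -- With `t' < t` close to `t` and `s' := c t' / 5^κ > s` we get `5^κ s' t'⁻¹ = c`.
  obtain ⟨t', ht', ht't⟩ : ∃ t', 5 ^ κ * s / c < t' ∧ t' < t := exists_between <| by
    rwa [div_lt_iff₀ hc0, mul_comm t, ← mul_inv_lt_iff₀ ht]
  have ht'0 : 0 < t' := lt_trans (by positivity) ht'
  have hs' : s < c * t' / 5 ^ κ := by
    rw [lt_div_iff₀ h5]
    rw [div_lt_iff₀ hc0] at ht'
    linarith
  have key := measure_le_of_dens_lt hκ hreg ht'0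
    (fun y hy => (h1 y hy).trans_lt ((ENNReal.ofReal_lt_ofReal_iff (by positivity)).2 hs'))
    (fun y hy => ((ENNReal.ofReal_lt_ofReal_iff ht).2 ht't).trans_le (h2 y hy))
  convert key using 3
  field_simp
end

section
/- Let X be a separable metric space, s > 0, and μ a finite Borel measure on X with finite s-energy I_s(μ) < ∞. Then there exist a Borel set B ⊆ X with μ(B) > 0 and a constant c' > 0 such that the restricted measure ν = μ|_B satisfies ν(B(x,r)) ≤ c'·r^s for all x ∈ X and all r > 0. -/
/-!
Finite energy means that the potential `x ↦ ∫ d(x, y)^{-s} dμ(y)` is integrable, hence finite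
`μ`-a.e., so one of its sublevel sets `B = {potential ≤ n}` has positive measure. If a ball
`B(x, r)` meets `B` at a point `z`, then `B(x, r) ⊆ B̄(z, 2r)`, on which `d(z, ·)^{-s} ≥ (2r)^{-s}`;
integrating gives `μ(B(x, r)) ≤ (2r)^s n`.
-/

open scoped ENNReal NNReal
open MeasureTheory Metric Set

/-- The `s`-energy of a measure. -/
noncomputable def energy {X : Type*} [PseudoMetricSpace X] [MeasurableSpace X] (s : ℝ)
    (μ : Measure X) : ℝ≥0∞ :=
  ∫⁻ x₁, ∫⁻ x₂, edist x₁ x₂ ^ (-s) ∂μ ∂μ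

noncomputable def potential {X : Type*} [PseudoMetricSpace X] [MeasurableSpace X] (s : ℝ)
    (μ : Measure X) (x : X) : ℝ≥0∞ :=
  ∫⁻ y, edist x y ^ (-s) ∂μ

section Potential

variable {X : Type*} [PseudoMetricSpace X] [MeasurableSpace X] [OpensMeasurableSpace X]
  {s : ℝ} {μ : Measure X}

theorem measurable_potential [SecondCountableTopology X] (s : ℝ) (μ : Measure X) [SFinite μ] :
    Measurable (potential s μ) :=
  Measurable.lintegral_prod_right' (f := fun p : X × X => edist p.1 p.2 ^ (-s))
    (measurable_edist.pow_const _)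

theorem measure_closedBall_le_rpow_mul_potential (hs : 0 ≤ s) (z : X) {R : ℝ} (hR : 0 < R) :
    μ (closedBall z R) ≤ ENNReal.ofReal R ^ s * potential s μ z := by
  have hR₀ : ENNReal.ofReal R ^ s ≠ 0 := (ENNReal.rpow_pos (by simpa) ENNReal.ofReal_ne_top).ne'
  have hR_top : ENNReal.ofReal R ^ s ≠ ∞ := ENNReal.rpow_ne_top_of_nonneg hs ENNReal.ofReal_ne_top
  rw [← ENNReal.inv_mul_le_iff hR₀ hR_top, ← ENNReal.rpow_neg]
  have hle : ∀ y ∈ closedBall z R, ENNReal.ofReal R ^ (-s) ≤ edist z y ^ (-s) := fun y hy => by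
    rw [ENNReal.rpow_neg, ENNReal.rpow_neg, ENNReal.inv_le_inv]
    exact ENNReal.rpow_le_rpow ((edist_le_ofReal hR.le).2 (by simpa [dist_comm] using hy)) hs
  calc ENNReal.ofReal R ^ (-s) * μ (closedBall z R)
      = ∫⁻ _ in closedBall z R, ENNReal.ofReal R ^ (-s) ∂μ := (setLIntegral_const _ _).symm
    _ ≤ ∫⁻ y in closedBall z R, edist z y ^ (-s) ∂μ :=
      setLIntegral_mono (measurable_edist_right.pow_const _) hle
    _ ≤ potential s μ z := setLIntegral_le_lintegral _ _

theorem measure_ball_le_rpow_mul_potential (hs : 0 ≤ s) {x z : X} {r : ℝ} (hz : z ∈ ball x r) :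
    μ (ball x r) ≤ ENNReal.ofReal (2 * r) ^ s * potential s μ z := by
  have hr : 0 < r := pos_of_mem_ball hz
  have hsub : ball x r ⊆ closedBall z (2 * r) :=
    ball_subset_closedBall.trans <| closedBall_subset_closedBall' <| by
      linarith [mem_ball.1 hz, dist_comm x z]
  exact (measure_mono hsub).trans (measure_closedBall_le_rpow_mul_potential hs z (by positivity))

theorem restrict_setOf_potential_le_ball_le (hs : 0 ≤ s) (M : ℝ≥0∞) (x : X) (r : ℝ) :
    μ.restrict {z | potential s μ z ≤ M} (ball x r) ≤ ENNReal.ofReal (2 * r) ^ s * M := by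
  rw [Measure.restrict_apply measurableSet_ball]
  rcases (ball x r ∩ {z | potential s μ z ≤ M}).eq_empty_or_nonempty with h | ⟨z, hzx, hzM⟩
  · simp [h]
  · calc μ (ball x r ∩ {z | potential s μ z ≤ M}) ≤ μ (ball x r) := measure_mono inter_subset_left
      _ ≤ ENNReal.ofReal (2 * r) ^ s * potential s μ z := measure_ball_le_rpow_mul_potential hs hzx
      _ ≤ ENNReal.ofReal (2 * r) ^ s * M := by gcongr; exact hzM

end Potential

theorem exists_nat_measure_setOf_le_pos {α : Type*} [MeasurableSpace α] {μ : Measure α}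
    {f : α → ℝ≥0∞} (hf : ∀ᵐ x ∂μ, f x < ∞) (hμ : μ ≠ 0) : ∃ n : ℕ, 0 < μ {x | f x ≤ n} := by
  refine exists_measure_pos_of_not_measure_iUnion_null fun h => hμ ?_
  rw [← ae_eq_bot, ← Filter.eventually_false_iff_eq_bot]
  filter_upwards [hf, measure_eq_zero_iff_ae_notMem.1 h] with x hx hxn
  obtain ⟨n, hn⟩ := ENNReal.exists_nat_gt hx.ne
  exact hxn (mem_iUnion.2 ⟨n, hn.le⟩)

theorem restrict_frostman_of_energy_lt_top {X : Type*}
    [MetricSpace X] [TopologicalSpace.SeparableSpace X] [MeasurableSpace X] [BorelSpace X]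
    (s : ℝ) (hs : 0 < s) (μ : Measure X) [IsFiniteMeasure μ]
    (hpos : 0 < μ Set.univ) (henergy : energy s μ < ⊤) :
    ∃ B : Set X, MeasurableSet B ∧ 0 < μ B ∧
      ∃ c' : ℝ, 0 < c' ∧
        ∀ x : X, ∀ r : ℝ, 0 < r → μ.restrict B (ball x r) ≤ ENNReal.ofReal (c' * r ^ s) := by
  have := UniformSpace.secondCountable_of_separable X
  have hfin : ∀ᵐ x ∂μ, potential s μ x < ∞ := ae_lt_top (measurable_potential s μ) henergy.ne
  obtain ⟨n, hn⟩ := exists_nat_measure_setOf_le_pos hfin (Measure.measure_univ_pos.1 hpos)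
  refine ⟨{x | potential s μ x ≤ n}, measurable_potential s μ measurableSet_Iic, hn,
    2 ^ s * (n + 1), by positivity, fun x r hr => ?_⟩
  calc μ.restrict {x | potential s μ x ≤ n} (ball x r) ≤ ENNReal.ofReal (2 * r) ^ s * n :=
        restrict_setOf_potential_le_ball_le hs.le _ x r
    _ = ENNReal.ofReal (2 ^ s * n * r ^ s) := by
        rw [ENNReal.ofReal_rpow_of_pos (by positivity), ← ENNReal.ofReal_natCast,
          ← ENNReal.ofReal_mul (by positivity), Real.mul_rpow zero_le_two hr.le]
        ring_nf
    _ ≤ ENNReal.ofReal (2 ^ s * (n + 1) * r ^ s) := by gcongr; linarith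
end

section
/- Let X be a separable metric space, s > 0, and suppose μ is a Borel measure on X with 0 < μ(X) < ∞ and a constant c > 0 such that μ(B(x,r)) ≤ c·r^s for all x ∈ X and r > 0. Then for every t with 0 ≤ t < s, the t-energy of μ is finite: I_t(μ) < ∞. -/
open scoped ENNReal NNReal
open MeasureTheory Metric Set

open Topology

lemma exists_pow_succ_le_and_lt_pow {d q : ℝ} (hd : 0 < d) (hd1 : d < 1) (hq : q < 1) :
    ∃ n : ℕ, q ^ (n + 1) ≤ d ∧ d < q ^ n := by
  by_contra! h
  have hlt : ∀ n : ℕ, d < q ^ n := by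
    intro n
    induction n with
    | zero => simpa using hd1
    | succ n ih => exact lt_of_not_ge fun hle => (h n hle).not_gt ih
  obtain ⟨n, hn⟩ := exists_pow_lt_of_lt_one hd hq
  exact (hlt n).asymm hn

lemma two_inv_pow_succ_rpow_neg_mul (n : ℕ) (c s t : ℝ) :
    ((2⁻¹ : ℝ) ^ (n + 1)) ^ (-t) * (c * ((2⁻¹ : ℝ) ^ n) ^ s)
      = 2 ^ t * c * ((2 : ℝ) ^ (t - s)) ^ n := by
  simp only [← Real.rpow_natCast, ← Real.rpow_mul zero_le_two, Real.inv_rpow zero_le_two,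
    ← Real.rpow_neg zero_le_two]
  rw [mul_left_comm, ← Real.rpow_add two_pos, mul_comm (2 ^ t), mul_assoc,
    ← Real.rpow_add two_pos]
  push_cast
  ring_nf

lemma ENNReal.rpow_neg_le_rpow_neg {a b : ℝ≥0∞} {t : ℝ} (ht : 0 ≤ t) (hab : a ≤ b) :
    b ^ (-t) ≤ a ^ (-t) := by
  rw [ENNReal.rpow_neg, ENNReal.rpow_neg]
  exact ENNReal.inv_le_inv.2 (ENNReal.rpow_le_rpow hab ht)

section PseudoMetric

variable {X : Type*} [PseudoMetricSpace X] [MeasurableSpace X] {μ : Measure X} {x : X}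

lemma measure_singleton_eq_zero_of_measure_ball_le {c s : ℝ} (hs : 0 < s)
    (hball : ∀ r : ℝ, 0 < r → μ (ball x r) ≤ ENNReal.ofReal (c * r ^ s)) : μ {x} = 0 := by
  have hlim : Filter.Tendsto (fun r : ℝ => ENNReal.ofReal (c * r ^ s)) (𝓝[>] 0) (𝓝 0) := by
    have h := ((Real.continuousAt_rpow_const 0 s (Or.inr hs.le)).const_mul c).tendsto
    rw [Real.zero_rpow hs.ne', mul_zero] at h
    simpa using (ENNReal.tendsto_ofReal h).mono_left nhdsWithin_le_nhds
  refine nonpos_iff_eq_zero.1 (ge_of_tendsto hlim ?_)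
  filter_upwards [self_mem_nhdsWithin] with r (hr : 0 < r)
  exact (measure_mono (singleton_subset_iff.2 (mem_ball_self hr))).trans (hball r hr)

lemma setLIntegral_edist_rpow_neg_le {t a : ℝ} (ht : 0 ≤ t) {S : Set X} (hS : MeasurableSet S)
    (hSa : S ⊆ (ball x a)ᶜ) :
    ∫⁻ y in S, edist x y ^ (-t) ∂μ ≤ ENNReal.ofReal a ^ (-t) * μ S := by
  calc ∫⁻ y in S, edist x y ^ (-t) ∂μ ≤ ∫⁻ _ in S, ENNReal.ofReal a ^ (-t) ∂μ := by
        refine setLIntegral_mono' hS fun y hy => ENNReal.rpow_neg_le_rpow_neg ht ?_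
        rw [edist_dist, dist_comm]
        exact ENNReal.ofReal_le_ofReal (not_lt.1 (hSa hy))
    _ = ENNReal.ofReal a ^ (-t) * μ S := setLIntegral_const S _

end PseudoMetric

section Metric

variable {X : Type*} [MetricSpace X]

lemma ball_one_subset_insert_iUnion_dyadic_shells (x : X) :
    ball x 1 ⊆ insert x (⋃ n : ℕ, ball x (2⁻¹ ^ n) \ ball x (2⁻¹ ^ (n + 1))) := by
  intro y hy
  rcases eq_or_ne y x with rfl | hne
  · exact mem_insert y _
  obtain ⟨n, hle, hlt⟩ :=
    exists_pow_succ_le_and_lt_pow (dist_pos.2 hne) (mem_ball.1 hy) (by norm_num : (2⁻¹ : ℝ) < 1)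
  exact mem_insert_of_mem x (mem_iUnion.2 ⟨n, mem_ball.2 hlt, fun h => (mem_ball.1 h).not_ge hle⟩)

variable [MeasurableSpace X] [OpensMeasurableSpace X] {μ : Measure X} {x : X} {c s t : ℝ}

lemma setLIntegral_ball_one_edist_rpow_neg_le (hs : 0 < s) (ht : 0 ≤ t)
    (hball : ∀ r : ℝ, 0 < r → μ (ball x r) ≤ ENNReal.ofReal (c * r ^ s)) :
    ∫⁻ y in ball x 1, edist x y ^ (-t) ∂μ
      ≤ ∑' n : ℕ, ENNReal.ofReal (2 ^ t * c * ((2 : ℝ) ^ (t - s)) ^ n) := by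
  set shell : ℕ → Set X := fun n => ball x (2⁻¹ ^ n) \ ball x (2⁻¹ ^ (n + 1))
  have hshell (n : ℕ) : ∫⁻ y in shell n, edist x y ^ (-t) ∂μ
      ≤ ENNReal.ofReal (2 ^ t * c * ((2 : ℝ) ^ (t - s)) ^ n) := by
    have hr : (0 : ℝ) < 2⁻¹ ^ (n + 1) := by positivity
    calc ∫⁻ y in shell n, edist x y ^ (-t) ∂μ
        ≤ ENNReal.ofReal (2⁻¹ ^ (n + 1)) ^ (-t) * μ (shell n) :=
          setLIntegral_edist_rpow_neg_le ht (measurableSet_ball.diff measurableSet_ball)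
            (fun _ hy => hy.2)
      _ ≤ ENNReal.ofReal (((2⁻¹ : ℝ) ^ (n + 1)) ^ (-t))
            * ENNReal.ofReal (c * ((2⁻¹ : ℝ) ^ n) ^ s) := by
          rw [ENNReal.ofReal_rpow_of_pos hr]
          gcongr
          exact (measure_mono sdiff_subset).trans (hball _ (by positivity))
      _ = ENNReal.ofReal (2 ^ t * c * ((2 : ℝ) ^ (t - s)) ^ n) := by
          rw [← ENNReal.ofReal_mul (by positivity), two_inv_pow_succ_rpow_neg_mul]
  calc ∫⁻ y in ball x 1, edist x y ^ (-t) ∂μ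
      ≤ ∫⁻ y in {x} ∪ ⋃ n, shell n, edist x y ^ (-t) ∂μ :=
        lintegral_mono_set (ball_one_subset_insert_iUnion_dyadic_shells x)
    _ ≤ ∫⁻ y in {x}, edist x y ^ (-t) ∂μ + ∫⁻ y in ⋃ n, shell n, edist x y ^ (-t) ∂μ :=
        lintegral_union_le _ _ _
    _ = ∫⁻ y in ⋃ n, shell n, edist x y ^ (-t) ∂μ := by
        rw [Measure.restrict_eq_zero.2 (measure_singleton_eq_zero_of_measure_ball_le hs hball),
          lintegral_zero_measure, zero_add]
    _ ≤ ∑' n, ∫⁻ y in shell n, edist x y ^ (-t) ∂μ := lintegral_iUnion_le _ _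
    _ ≤ ∑' n : ℕ, ENNReal.ofReal (2 ^ t * c * ((2 : ℝ) ^ (t - s)) ^ n) :=
        ENNReal.tsum_le_tsum hshell

lemma lintegral_edist_rpow_neg_le (hs : 0 < s) (ht : 0 ≤ t)
    (hball : ∀ r : ℝ, 0 < r → μ (ball x r) ≤ ENNReal.ofReal (c * r ^ s)) :
    ∫⁻ y, edist x y ^ (-t) ∂μ
      ≤ ∑' n : ℕ, ENNReal.ofReal (2 ^ t * c * ((2 : ℝ) ^ (t - s)) ^ n) + μ univ := by
  rw [← lintegral_add_compl _ (measurableSet_ball (x := x) (ε := 1))]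
  refine add_le_add (setLIntegral_ball_one_edist_rpow_neg_le hs ht hball) ?_
  calc ∫⁻ y in (ball x 1)ᶜ, edist x y ^ (-t) ∂μ ≤ ENNReal.ofReal 1 ^ (-t) * μ (ball x 1)ᶜ :=
        setLIntegral_edist_rpow_neg_le ht measurableSet_ball.compl subset_rfl
    _ ≤ μ univ := by
        rw [ENNReal.ofReal_one, ENNReal.one_rpow, one_mul]
        exact measure_mono (subset_univ _)

end Metric

theorem energy_lt_top_of_frostman_general {X : Type*}
    [MetricSpace X] [MeasurableSpace X] [BorelSpace X]
    (s : ℝ) (hs : 0 < s) (μ : Measure X)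
    (hfin : μ Set.univ < ⊤)
    (c : ℝ)
    (hball : ∀ x : X, ∀ r : ℝ, 0 < r → μ (ball x r) ≤ ENNReal.ofReal (c * r ^ s)) :
    ∀ t : ℝ, 0 ≤ t → t < s → energy t μ < ⊤ := by
  intro t ht hts
  set K := ∑' n : ℕ, ENNReal.ofReal (2 ^ t * c * ((2 : ℝ) ^ (t - s)) ^ n) + μ univ
  have hratio : (2 : ℝ) ^ (t - s) < 1 := Real.rpow_lt_one_of_one_lt_of_neg one_lt_two (by linarith)
  have hK : K < ⊤ := ENNReal.add_lt_top.2
    ⟨((summable_geometric_of_lt_one (by positivity) hratio).mul_left _).tsum_ofReal_lt_top, hfin⟩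
  calc energy t μ ≤ ∫⁻ _, K ∂μ :=
        lintegral_mono fun x => lintegral_edist_rpow_neg_le hs ht (hball x)
    _ = K * μ univ := lintegral_const K
    _ < ⊤ := ENNReal.mul_lt_top hK hfin

theorem energy_lt_top_of_frostman {X : Type*}
    [MetricSpace X] [TopologicalSpace.SeparableSpace X] [MeasurableSpace X] [BorelSpace X]
    (s : ℝ) (hs : 0 < s) (μ : Measure X)
    (h0 : 0 < μ Set.univ) (hfin : μ Set.univ < ⊤)
    (c : ℝ) (hc : 0 < c)
    (hball : ∀ x : X, ∀ r : ℝ, 0 < r → μ (ball x r) ≤ ENNReal.ofReal (c * r ^ s)) :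
    ∀ t : ℝ, 0 ≤ t → t < s → energy t μ < ⊤ :=
  energy_lt_top_of_frostman_general s hs μ hfin c hball
end

section
/- Let Y be a separable metric space, κ > 0, and let ν, η be Borel measures on Y with η upper regular by open sets and D^κη(y) > 0 for all y ∈ Y. Suppose ν(Y) > 0 and ∫_Y D^κν dν < ∞ (so in particular D^κν < ∞ ν-almost everywhere). Then η(S) > 0 for every Borel set S ⊆ Y with ν(Y \ S) = 0; in particular, if ν is the pushforward of a positive finite measure under a map with image contained in a set E, then η(E) > 0. -/
/-! As `D^κν` is measurable with finite integral, it is finite `ν`-a.e.; since `D^κη > 0` and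
`ν ≠ 0`, there are `a < ∞` and `b > 0` such that the set `A` where `D^κν < a` and `D^κη > b` has
positive `ν`-measure. Around each point `y` of `A ∩ U`, `U` open, there is a radius `ρ` with
`B(y, 5ρ) ⊆ U`, `ν(B(y, 5ρ)) ≤ a (5ρ)^κ` and `b ρ^κ ≤ η(B(y, ρ))`; the Vitali covering lemma then
gives `ν(A ∩ U) ≤ 5^κ a / b · η(U)`. When `ν(Uᶜ) = 0` this bounds `η(U)` below by
`b ν(A) / (5^κ a) > 0`, and upper regularity of `η` passes the bound to every set all of whose open
neighbourhoods are `ν`-conull: a `ν`-conull set, or the range of a map pushing a measure forward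
to `ν`. -/

open scoped ENNReal NNReal
open MeasureTheory Metric Filter Set Topology

universe u

theorem iInf_Ioo_eq_iInf_rat {α : Type*} [CompleteLattice α] [TopologicalSpace α]
    [ClosedIciTopology α] {f : ℝ → α} {a b : ℝ}
    (hf : ∀ r ∈ Ioo a b, Tendsto f (𝓝[<] r) (𝓝 (f r))) :
    ⨅ r ∈ Ioo a b, f r = ⨅ (q : ℚ) (_ : (q : ℝ) ∈ Ioo a b), f q := by
  refine le_antisymm (le_iInf₂ fun q hq => iInf₂_le _ hq) (le_iInf₂ fun r hr => ?_)
  refine ge_of_tendsto_of_frequently (hf r hr) ((nhdsLT_basis r).frequently_iff.2 fun l hl => ?_)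
  obtain ⟨q, hlq, hqr⟩ := exists_rat_btwn (max_lt hl hr.1)
  rw [max_lt_iff] at hlq
  exact ⟨q, ⟨hlq.1, hqr⟩, iInf₂_le q ⟨hlq.2, hqr.trans hr.2⟩⟩

theorem nhdsGT_zero_basis_rat :
    (𝓝[>] (0 : ℝ)).HasBasis (fun q : ℚ => 0 < q) fun q => Ioo 0 (q : ℝ) :=
  (nhdsGT_basis 0).to_hasBasis
    (fun ε hε => let ⟨q, h0, hq⟩ := exists_rat_btwn hε
      ⟨q, by exact_mod_cast h0, Ioo_subset_Ioo_right hq.le⟩)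
    fun q hq => ⟨q, by exact_mod_cast hq, subset_rfl⟩

/-- Left continuity in the radius lets the infima defining the liminf run over rational radii. -/
theorem measurable_liminf_nhdsGT_zero {X : Type*} [MeasurableSpace X] {g : X → ℝ → ℝ≥0∞}
    (hmeas : ∀ r, Measurable fun x => g x r)
    (hcont : ∀ x, ∀ r > 0, Tendsto (g x) (𝓝[<] r) (𝓝 (g x r))) :
    Measurable fun x => liminf (g x) (𝓝[>] 0) := by
  simp_rw [nhdsGT_zero_basis_rat.liminf_eq_iSup_iInf]
  have hrat : ∀ x, ∀ q : ℚ, ⨅ r ∈ Ioo 0 (q : ℝ), g x r =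
      ⨅ (p : ℚ) (_ : (p : ℝ) ∈ Ioo 0 (q : ℝ)), g x p :=
    fun x q => iInf_Ioo_eq_iInf_rat fun r hr => hcont x r hr.1
  simp_rw [hrat]
  exact .iSup fun q => .iSup fun _ => .iInf fun p => .iInf fun _ => hmeas p

section Measurability

variable {Y : Type*} [PseudoMetricSpace Y] [MeasurableSpace Y]

theorem measure_ball_eq_iSup_Iio (ν : Measure Y) (y : Y) (r : ℝ) :
    ν (ball y r) = ⨆ s : Iio r, ν (ball y s) := by
  have hmono : Monotone fun s : Iio r => ball y (s : ℝ) := fun s t hst => ball_subset_ball hst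
  rw [← hmono.measure_iUnion]
  congr 1
  ext z
  simp only [mem_ball, mem_iUnion, Subtype.exists, mem_Iio, exists_prop]
  constructor
  · intro hz
    obtain ⟨s, hzs, hsr⟩ := exists_between hz
    exact ⟨s, hsr, hzs⟩
  · rintro ⟨s, hsr, hzs⟩
    exact hzs.trans hsr

theorem tendsto_measure_ball_nhdsLT (ν : Measure Y) (y : Y) (r : ℝ) :
    Tendsto (fun s => ν (ball y s)) (𝓝[<] r) (𝓝 (ν (ball y r))) := by
  have hmono : Monotone fun s => ν (ball y s) := fun s t hst => measure_mono (ball_subset_ball hst)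
  have h := hmono.tendsto_nhdsLT r
  rwa [sSup_image', ← measure_ball_eq_iSup_Iio] at h

theorem lowerSemicontinuous_measure_ball (ν : Measure Y) (r : ℝ) :
    LowerSemicontinuous fun y => ν (ball y r) := by
  intro y c hc
  change c < ν (ball y r) at hc
  rw [measure_ball_eq_iSup_Iio] at hc
  obtain ⟨⟨s, hsr⟩, hcs⟩ := lt_iSup_iff.1 hc
  filter_upwards [ball_mem_nhds y (sub_pos.2 hsr)] with y' hy'
  refine hcs.trans_le (measure_mono fun z hz => ?_)
  rw [mem_ball] at hz hy' ⊢
  linarith [dist_triangle z y y', dist_comm y y']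

theorem tendsto_measure_ball_div_nhdsLT (κ : ℝ) (ν : Measure Y) (y : Y) {r : ℝ} (hr : 0 < r) :
    Tendsto (fun s => ν (ball y s) / ENNReal.ofReal (s ^ κ)) (𝓝[<] r)
      (𝓝 (ν (ball y r) / ENNReal.ofReal (r ^ κ))) := by
  have hden : Tendsto (fun s : ℝ => ENNReal.ofReal (s ^ κ)) (𝓝[<] r)
      (𝓝 (ENNReal.ofReal (r ^ κ))) :=
    ((ENNReal.continuous_ofReal.tendsto _).comp
      (Real.continuousAt_rpow_const r κ (Or.inl hr.ne')).tendsto).mono_left nhdsWithin_le_nhds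
  exact ENNReal.Tendsto.div (tendsto_measure_ball_nhdsLT ν y r)
    (Or.inr (ENNReal.ofReal_pos.2 (Real.rpow_pos_of_pos hr κ)).ne') hden
    (Or.inl ENNReal.ofReal_ne_top)

theorem measurable_dens [OpensMeasurableSpace Y] (κ : ℝ) (ν : Measure Y) :
    Measurable (dens κ ν) :=
  measurable_liminf_nhdsGT_zero
    (fun r => (lowerSemicontinuous_measure_ball ν r).measurable.div_const _)
    fun y _ hr => tendsto_measure_ball_div_nhdsLT κ ν y hr

end Measurability

section Covering

variable {Y : Type*} [PseudoMetricSpace Y] [MeasurableSpace Y] {κ : ℝ} {ν η : Measure Y} {y : Y}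
  {a b : ℝ≥0∞}

theorem frequently_measure_ball_lt_of_dens_lt (h : dens κ ν y < a) :
    ∃ᶠ r in 𝓝[>] 0, ν (ball y r) < a * ENNReal.ofReal (r ^ κ) := by
  refine (frequently_lt_of_liminf_lt (by isBoundedDefault) h).mp ?_
  filter_upwards [self_mem_nhdsWithin] with r hr hlt
  exact (ENNReal.div_lt_iff (Or.inl (ENNReal.ofReal_pos.2 (Real.rpow_pos_of_pos hr κ)).ne')
    (Or.inl ENNReal.ofReal_ne_top)).1 hlt

theorem eventually_le_measure_ball_div_of_lt_dens (h : b < dens κ η y) :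
    ∀ᶠ r in 𝓝[>] 0, ENNReal.ofReal (r ^ κ) ≤ η (ball y r) / b := by
  filter_upwards [eventually_lt_of_lt_liminf h] with r hr
  have hb : b ≠ ∞ := (h.trans_le le_top).ne
  have hmul := (ENNReal.lt_div_iff_mul_lt (Or.inr hb) (Or.inl ENNReal.ofReal_ne_top)).1 hr
  rw [ENNReal.le_div_iff_mul_le (Or.inr (pos_of_gt hmul).ne') (Or.inl hb), mul_comm]
  exact hmul.le

theorem exists_radius_of_dens_lt_of_lt_dens {U : Set Y} (hU : IsOpen U) (hy : y ∈ U)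
    (hν : dens κ ν y < a) (hη : b < dens κ η y) :
    ∃ ρ : ℝ, 0 < ρ ∧ ρ ≤ 1 ∧ ball y (5 * ρ) ⊆ U ∧
      ν (ball y (5 * ρ)) ≤ a * ENNReal.ofReal ((5 * ρ) ^ κ) ∧
      ENNReal.ofReal (ρ ^ κ) ≤ η (ball y ρ) / b := by
  have hdiv : Tendsto (fun r : ℝ => r / 5) (𝓝[>] 0) (𝓝[>] 0) := by
    refine tendsto_nhdsWithin_iff.2 ⟨?_, ?_⟩
    · simpa using ((continuous_id.div_const (5 : ℝ)).tendsto 0).mono_left nhdsWithin_le_nhds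
    · filter_upwards [self_mem_nhdsWithin] with r hr using div_pos (mem_Ioi.1 hr) (by norm_num)
  obtain ⟨δ, hδ, hδU⟩ := Metric.isOpen_iff.1 hU y hy
  have hsmall : ∀ᶠ r in 𝓝[>] (0 : ℝ), r < min δ 5 :=
    eventually_nhdsWithin_of_eventually_nhds (eventually_lt_nhds (lt_min hδ (by norm_num)))
  obtain ⟨r, hνr, hηr, hr0, hr⟩ := ((frequently_measure_ball_lt_of_dens_lt hν).and_eventually
    ((hdiv.eventually (eventually_le_measure_ball_div_of_lt_dens hη)).and
      (eventually_mem_nhdsWithin.and hsmall))).exists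
  rw [lt_min_iff] at hr
  have h5 : 5 * (r / 5) = r := by ring
  refine ⟨r / 5, div_pos (mem_Ioi.1 hr0) (by norm_num), by linarith, ?_, ?_, hηr⟩ <;> rw [h5]
  · exact (ball_subset_ball hr.1.le).trans hδU
  · exact hνr.le

theorem measure_le_of_dens_lt_of_lt_dens [TopologicalSpace.SeparableSpace Y]
    [OpensMeasurableSpace Y] {U B : Set Y} (hU : IsOpen U) (hBU : B ⊆ U)
    (hB : ∀ y ∈ B, dens κ ν y < a ∧ b < dens κ η y) :
    ν B ≤ a * ENNReal.ofReal (5 ^ κ) / b * η U := by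
  choose! ρ hρ0 hρ1 hρU hρν hρη using
    fun y hy => exists_radius_of_dens_lt_of_lt_dens hU (hBU hy) (hB y hy).1 (hB y hy).2
  obtain ⟨u, huB, hu_disj, hcov⟩ :=
    Vitali.exists_disjoint_subfamily_covering_enlargement_closedBall B id ρ 1 hρ1 4 (by norm_num)
  have hu_disj' : u.PairwiseDisjoint fun z => ball z (ρ z) :=
    hu_disj.mono fun z => ball_subset_closedBall
  have hu_count : u.Countable :=
    hu_disj'.countable_of_isOpen (fun _ _ => isOpen_ball)
      fun z hz => nonempty_ball.2 (hρ0 z (huB hz))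
  have hB_cov : B ⊆ ⋃ z ∈ u, ball z (5 * ρ z) := by
    intro y hy
    obtain ⟨z, hzu, hyz⟩ := hcov y hy
    have hy' := mem_closedBall.1 (hyz (mem_closedBall_self (hρ0 y hy).le))
    exact mem_biUnion hzu (mem_ball.2 (hy'.trans_lt (by linarith [hρ0 z (huB hzu)])))
  set C := a * ENNReal.ofReal (5 ^ κ) / b
  have hball : ∀ z ∈ B, ν (ball z (5 * ρ z)) ≤ C * η (ball z (ρ z)) := by
    intro z hz
    calc ν (ball z (5 * ρ z)) ≤ a * ENNReal.ofReal ((5 * ρ z) ^ κ) := hρν z hz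
      _ = a * ENNReal.ofReal (5 ^ κ) * ENNReal.ofReal (ρ z ^ κ) := by
        rw [Real.mul_rpow (by norm_num) (hρ0 z hz).le, ENNReal.ofReal_mul (by positivity),
          mul_assoc]
      _ ≤ a * ENNReal.ofReal (5 ^ κ) * (η (ball z (ρ z)) / b) := by gcongr; exact hρη z hz
      _ = C * η (ball z (ρ z)) := by simp only [C, div_eq_mul_inv]; ring
  calc ν B ≤ ν (⋃ z ∈ u, ball z (5 * ρ z)) := measure_mono hB_cov
    _ ≤ ∑' z : u, ν (ball z (5 * ρ z)) := measure_biUnion_le ν hu_count _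
    _ ≤ ∑' z : u, C * η (ball z (ρ z)) := ENNReal.tsum_le_tsum fun z => hball z (huB z.2)
    _ = C * η (⋃ z ∈ u, ball z (ρ z)) := by
      rw [ENNReal.tsum_mul_left, measure_biUnion hu_count hu_disj' fun _ _ => measurableSet_ball]
    _ ≤ C * η U := by
      gcongr
      exact iUnion₂_subset fun z hz => (ball_subset_ball (by linarith [hρ0 z (huB hz)])).trans
        (hρU z (huB hz))

end Covering

theorem exists_pos_measure_setOf_lt_and_lt {X : Type*} [MeasurableSpace X] {μ : Measure X}
    (hμ : μ ≠ 0) {f g : X → ℝ≥0∞} (hf : ∀ᵐ x ∂μ, f x < ∞) (hg : ∀ᵐ x ∂μ, 0 < g x) :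
    ∃ a b : ℝ≥0∞, a ≠ ∞ ∧ b ≠ 0 ∧ 0 < μ {x | f x < a ∧ b < g x} := by
  by_contra! h
  have hnull : μ (⋃ p : ℕ × ℕ, {x | f x < p.1 ∧ (p.2 : ℝ≥0∞)⁻¹ < g x}) = 0 :=
    measure_iUnion_null fun p => nonpos_iff_eq_zero.1
      (h _ _ (ENNReal.natCast_ne_top _) (ENNReal.inv_ne_zero.2 (ENNReal.natCast_ne_top _)))
  have := ae_neBot.2 hμ
  obtain ⟨x, hfx, hgx, hx⟩ := (hf.and (hg.and (measure_eq_zero_iff_ae_notMem.1 hnull))).exists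
  obtain ⟨M, hM⟩ := ENNReal.exists_nat_gt hfx.ne
  obtain ⟨n, hn⟩ := ENNReal.exists_inv_nat_lt hgx.ne'
  exact hx (mem_iUnion.2 ⟨(M, n), hM, hn⟩)

theorem UpperRegular.le_measure {Y : Type*} [TopologicalSpace Y] [MeasurableSpace Y]
    {η : Measure Y} (hη : UpperRegular η) {S : Set Y} {c : ℝ≥0∞}
    (h : ∀ U, IsOpen U → S ⊆ U → c ≤ η U) : c ≤ η S :=
  (hη S).symm ▸ le_iInf₂ fun U hU => le_iInf (h U hU)

theorem pos_measure_of_density_conull_general {Y : Type*}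
    [MetricSpace Y] [TopologicalSpace.SeparableSpace Y] [MeasurableSpace Y] [BorelSpace Y]
    (κ : ℝ) (ν η : Measure Y) (hreg : UpperRegular η)
    (hdη : ∀ y : Y, 0 < dens κ η y)
    (hν : 0 < ν Set.univ) (hint : ∫⁻ y, dens κ ν y ∂ν < ⊤) :
    (∀ S : Set Y, MeasurableSet S → ν Sᶜ = 0 → 0 < η S) ∧
      ∀ (Z : Type u) [MeasurableSpace Z] (μ₀ : Measure Z) (f : Z → Y),
        Measurable f → 0 < μ₀ Set.univ → μ₀ Set.univ < ⊤ → ν = Measure.map f μ₀ →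
          ∀ E : Set Y, Set.range f ⊆ E → 0 < η E := by
  obtain ⟨a, b, ha, hb, hA⟩ := exists_pos_measure_setOf_lt_and_lt (Measure.measure_univ_pos.1 hν)
    (ae_lt_top (measurable_dens κ ν) hint.ne) (ae_of_all _ hdη)
  have hpos : 0 < ν {y | dens κ ν y < a ∧ b < dens κ η y} / (a * ENNReal.ofReal (5 ^ κ) / b) :=
    ENNReal.div_pos hA.ne' (ENNReal.div_ne_top (ENNReal.mul_ne_top ha ENNReal.ofReal_ne_top) hb)
  have hconull : ∀ S : Set Y, (∀ U, IsOpen U → S ⊆ U → ν Uᶜ = 0) → 0 < η S := by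
    refine fun S hS => hpos.trans_le (hreg.le_measure fun U hU hSU => ?_)
    refine ENNReal.div_le_of_le_mul' ?_
    rw [← measure_inter_conull (hS U hU hSU)]
    exact measure_le_of_dens_lt_of_lt_dens hU inter_subset_right fun y hy => hy.1
  refine ⟨fun S _ hS => hconull S fun U _ hSU =>
    measure_mono_null (compl_subset_compl.2 hSU) hS, ?_⟩
  rintro Z _ μ₀ f hf - - rfl E hE
  refine (hconull _ fun U hU hfU => ?_).trans_le (measure_mono hE)
  rw [Measure.map_apply hf hU.measurableSet.compl, preimage_compl, preimage_eq_univ_iff.2 hfU,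
    compl_univ, measure_empty]

theorem pos_measure_of_density_conull {Y : Type*}
    [MetricSpace Y] [TopologicalSpace.SeparableSpace Y] [MeasurableSpace Y] [BorelSpace Y]
    (κ : ℝ) (hκ : 0 < κ) (ν η : Measure Y) (hreg : UpperRegular η)
    (hdη : ∀ y : Y, 0 < dens κ η y)
    (hν : 0 < ν Set.univ) (hint : ∫⁻ y, dens κ ν y ∂ν < ⊤) :
    (∀ S : Set Y, MeasurableSet S → ν Sᶜ = 0 → 0 < η S) ∧
      ∀ (Z : Type u) [MeasurableSpace Z] (μ₀ : Measure Z) (f : Z → Y),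
        Measurable f → 0 < μ₀ Set.univ → μ₀ Set.univ < ⊤ → ν = Measure.map f μ₀ →
          ∀ E : Set Y, Set.range f ⊆ E → 0 < η E :=
  pos_measure_of_density_conull_general κ ν η hreg hdη hν hint
end
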